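/- arXiv:2410.04996 — 2 statements merged into one kernel-verified Lean document; each statement's English description precedes it below -/
import Mathlib

section
/- Let X be a random vector in ℝᵈ with E‖X‖² < ∞, and let U, Û be random vectors on the same probability space. Then ‖E[Cov(X|U)] − E[Cov(X|Û)]‖_op ≤ 2‖X‖_{L₂} · ‖E[X|Û] − E[X|U]‖_{L₂}, where Cov(X|U) = E[XXᵀ|U] − E[X|U]E[X|U]ᵀ and ‖X‖_{L₂} = (E‖X‖²)^{1/2}. -/
/-!
By the tower property, `E[Cov(X|U)] = E[X Xᵀ] - E[Y Yᵀ]` with `Y = E[X|U]`, so the difference of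
the two expected conditional covariances is `E[Z Zᵀ] - E[Y Yᵀ]` with `Z = E[X|Û]`. Applied to a
vector `v` this matrix gives `E[⟪v, Z⟫ Z - ⟪v, Y⟫ Y] = E[⟪v, Z - Y⟫ Z + ⟪v, Y⟫ (Z - Y)]`, of norm at
most `‖v‖ E[‖Z - Y‖ (‖Y‖ + ‖Z‖)] ≤ ‖v‖ ‖Z - Y‖₂ (‖Y‖₂ + ‖Z‖₂)` by Cauchy–Schwarz, and conditional
Jensen bounds `‖Y‖₂` and `‖Z‖₂` by `‖X‖₂`.
-/

open MeasureTheory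

/-- Operator (spectral) norm of a real matrix, via the induced Euclidean linear map. -/
noncomputable def opN {d r : ℕ} (M : Matrix (Fin d) (Fin r) ℝ) : ℝ :=
  ‖LinearMap.toContinuousLinearMap (Matrix.toEuclideanLin M)‖

open scoped RealInnerProductSpace

theorem norm_inner_smul_sub_inner_smul_le {E : Type*} [NormedAddCommGroup E]
    [InnerProductSpace ℝ E] (x y v : E) :
    ‖⟪v, y⟫ • y - ⟪v, x⟫ • x‖ ≤ ‖v‖ * (‖y - x‖ * ‖x‖ + ‖y - x‖ * ‖y‖) := by
  have hsplit : ⟪v, y⟫ • y - ⟪v, x⟫ • x = ⟪v, y - x⟫ • y + ⟪v, x⟫ • (y - x) := by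
    rw [inner_sub_right, sub_smul, smul_sub]; abel
  rw [hsplit]
  refine (norm_add_le _ _).trans ?_
  rw [norm_smul, norm_smul, Real.norm_eq_abs, Real.norm_eq_abs]
  have h1 := abs_real_inner_le_norm v (y - x)
  have h2 := abs_real_inner_le_norm v x
  calc |⟪v, y - x⟫| * ‖y‖ + |⟪v, x⟫| * ‖y - x‖
      ≤ ‖v‖ * ‖y - x‖ * ‖y‖ + ‖v‖ * ‖x‖ * ‖y - x‖ := by gcongr
    _ = ‖v‖ * (‖y - x‖ * ‖x‖ + ‖y - x‖ * ‖y‖) := by ring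

section

variable {Ω : Type*} {m m0 : MeasurableSpace Ω} {μ : Measure Ω}

theorem integral_norm_mul_norm_le_lpNorm_mul_lpNorm {E F : Type*} [NormedAddCommGroup E]
    [NormedAddCommGroup F] {p q : ℝ} (hpq : p.HolderConjugate q) {f : Ω → E} {g : Ω → F}
    (hf : MemLp f (.ofReal p) μ) (hg : MemLp g (.ofReal q) μ) :
    ∫ ω, ‖f ω‖ * ‖g ω‖ ∂μ ≤ lpNorm f (.ofReal p) μ * lpNorm g (.ofReal q) μ := by
  have hp := hpq.pos
  have hq := hpq.symm.pos
  rw [lpNorm_eq_integral_norm_rpow_toReal (by simpa using hp) ENNReal.ofReal_ne_top hf.1,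
    lpNorm_eq_integral_norm_rpow_toReal (by simpa using hq) ENNReal.ofReal_ne_top hg.1,
    ENNReal.toReal_ofReal hp.le, ENNReal.toReal_ofReal hq.le, inv_eq_one_div, inv_eq_one_div]
  exact integral_mul_le_Lp_mul_Lq_of_nonneg hpq (.of_forall fun _ => norm_nonneg _)
    (.of_forall fun _ => norm_nonneg _) hf.norm hg.norm

theorem integral_norm_mul_norm_le_lpNorm_two_mul_lpNorm_two {E F : Type*} [NormedAddCommGroup E]
    [NormedAddCommGroup F] {f : Ω → E} {g : Ω → F} (hf : MemLp f 2 μ) (hg : MemLp g 2 μ) :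
    ∫ ω, ‖f ω‖ * ‖g ω‖ ∂μ ≤ lpNorm f 2 μ * lpNorm g 2 μ := by
  have h2 : ENNReal.ofReal 2 = 2 := ENNReal.ofReal_ofNat 2
  have := integral_norm_mul_norm_le_lpNorm_mul_lpNorm Real.HolderConjugate.two_two
    (h2 ▸ hf) (h2 ▸ hg)
  rwa [h2] at this

theorem lpNorm_two_eq_sqrt_integral_norm_sq {E : Type*} [NormedAddCommGroup E] {f : Ω → E}
    (hf : AEStronglyMeasurable f μ) : lpNorm f 2 μ = √(∫ ω, ‖f ω‖ ^ 2 ∂μ) := by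
  rw [lpNorm_eq_integral_norm_rpow_toReal two_ne_zero ENNReal.ofNat_ne_top hf, Real.sqrt_eq_rpow]
  norm_num

theorem integral_condExp_mul_sub_mul [IsFiniteMeasure μ] (hm : m ≤ m0) {f g : Ω → ℝ}
    (hf : MemLp f 2 μ) (hg : MemLp g 2 μ) :
    ∫ ω, (μ[fun ω => f ω * g ω | m] ω - μ[f | m] ω * μ[g | m] ω) ∂μ
      = ∫ ω, f ω * g ω ∂μ - ∫ ω, μ[f | m] ω * μ[g | m] ω ∂μ := by
  have hfg : Integrable (fun ω => μ[f | m] ω * μ[g | m] ω) μ :=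
    (hf.condExp one_le_two).integrable_mul (hg.condExp one_le_two)
  rw [integral_sub integrable_condExp hfg, integral_condExp hm]

theorem MeasureTheory.MemLp.integrable_inner_smul_self {E : Type*} [NormedAddCommGroup E]
    [InnerProductSpace ℝ E] {F : Ω → E} (hF : MemLp F 2 μ) (v : E) :
    Integrable (fun ω => ⟪v, F ω⟫ • F ω) μ :=
  memLp_one_iff_integrable.1 (hF.smul ((innerSL ℝ v).comp_memLp' hF))

variable {ι : Type*} [Fintype ι]

theorem MeasureTheory.MemLp.euclideanSpace_apply {p : ENNReal} {X : Ω → EuclideanSpace ℝ ι}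
    (hX : MemLp X p μ) (i : ι) : MemLp (fun ω => X ω i) p μ :=
  (EuclideanSpace.proj (𝕜 := ℝ) i).comp_memLp' hX

theorem condExp_euclideanSpace_apply_ae_eq {X : Ω → EuclideanSpace ℝ ι} (hX : Integrable X μ)
    (i : ι) : μ[fun ω => X ω i | m] =ᵐ[μ] fun ω => μ[X | m] ω i :=
  ((EuclideanSpace.proj i).comp_condExp_comm hX).symm

noncomputable def secondMoment (μ : Measure Ω) (F : Ω → EuclideanSpace ℝ ι) : Matrix ι ι ℝ :=
  Matrix.of fun i j => ∫ ω, F ω i * F ω j ∂μ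

theorem integral_condCov_eq_secondMoment_sub [IsFiniteMeasure μ] (hm : m ≤ m0)
    {X : Ω → EuclideanSpace ℝ ι} (hX : MemLp X 2 μ) :
    Matrix.of (fun i j => ∫ ω, (μ[fun ω => X ω i * X ω j | m] ω
        - μ[fun ω => X ω i | m] ω * μ[fun ω => X ω j | m] ω) ∂μ)
      = secondMoment μ X - secondMoment μ μ[X | m] := by
  ext i j
  rw [Matrix.of_apply, integral_condExp_mul_sub_mul hm (hX.euclideanSpace_apply i)
    (hX.euclideanSpace_apply j)]
  refine congrArg _ (integral_congr_ae ?_)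
  filter_upwards [condExp_euclideanSpace_apply_ae_eq (m := m) (hX.integrable one_le_two) i,
    condExp_euclideanSpace_apply_ae_eq (m := m) (hX.integrable one_le_two) j] with ω hi hj
  rw [hi, hj]

theorem toEuclideanLin_secondMoment [DecidableEq ι] {F : Ω → EuclideanSpace ℝ ι}
    (hF : MemLp F 2 μ) (v : EuclideanSpace ℝ ι) :
    Matrix.toEuclideanLin (secondMoment μ F) v = ∫ ω, ⟪v, F ω⟫ • F ω ∂μ := by
  ext i
  have hint (j : ι) : Integrable (fun ω => F ω i * F ω j * v j) μ :=
    ((hF.euclideanSpace_apply i).integrable_mul (hF.euclideanSpace_apply j)).mul_const _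
  rw [show (∫ ω, ⟪v, F ω⟫ • F ω ∂μ) i
      = EuclideanSpace.proj (𝕜 := ℝ) i (∫ ω, ⟪v, F ω⟫ • F ω ∂μ) from rfl,
    ← (EuclideanSpace.proj i).integral_comp_comm (hF.integrable_inner_smul_self v),
    Matrix.ofLp_toLpLin, Matrix.toLin'_apply]
  simp only [Matrix.mulVec, dotProduct, secondMoment, Matrix.of_apply, ← integral_mul_const]
  rw [← integral_finsetSum _ fun j _ => hint j]
  refine integral_congr_ae (.of_forall fun ω => ?_)
  simp only [map_smul, smul_eq_mul, PiLp.inner_apply, Finset.sum_mul]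
  exact Finset.sum_congr rfl fun j _ => by
    simp only [RCLike.inner_apply, conj_trivial, PiLp.proj_apply]; ring

theorem opN_secondMoment_sub_le {d : ℕ} {F G : Ω → EuclideanSpace ℝ (Fin d)}
    (hF : MemLp F 2 μ) (hG : MemLp G 2 μ) :
    opN (secondMoment μ G - secondMoment μ F)
      ≤ (lpNorm F 2 μ + lpNorm G 2 μ) * lpNorm (G - F) 2 μ := by
  have hGF : MemLp (G - F) 2 μ := hG.sub hF
  have hprod {H : Ω → EuclideanSpace ℝ (Fin d)} (hH : MemLp H 2 μ) :
      Integrable (fun ω => ‖(G - F) ω‖ * ‖H ω‖) μ :=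
    hGF.norm.integrable_mul hH.norm
  refine ContinuousLinearMap.opNorm_le_bound _
    (mul_nonneg (add_nonneg lpNorm_nonneg lpNorm_nonneg) lpNorm_nonneg) fun v => ?_
  rw [LinearMap.coe_toContinuousLinearMap', map_sub, LinearMap.sub_apply,
    toEuclideanLin_secondMoment hG, toEuclideanLin_secondMoment hF,
    ← integral_sub (hG.integrable_inner_smul_self v) (hF.integrable_inner_smul_self v)]
  calc ‖∫ ω, (⟪v, G ω⟫ • G ω - ⟪v, F ω⟫ • F ω) ∂μ‖
      ≤ ∫ ω, ‖v‖ * (‖(G - F) ω‖ * ‖F ω‖ + ‖(G - F) ω‖ * ‖G ω‖) ∂μ :=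
        norm_integral_le_of_norm_le (((hprod hF).add (hprod hG)).const_mul _)
          (.of_forall fun ω => norm_inner_smul_sub_inner_smul_le (F ω) (G ω) v)
    _ = ‖v‖ * (∫ ω, ‖(G - F) ω‖ * ‖F ω‖ ∂μ + ∫ ω, ‖(G - F) ω‖ * ‖G ω‖ ∂μ) := by
        rw [integral_const_mul, integral_add (hprod hF) (hprod hG)]
    _ ≤ ‖v‖ * (lpNorm (G - F) 2 μ * lpNorm F 2 μ + lpNorm (G - F) 2 μ * lpNorm G 2 μ) := by
        gcongr
        · exact integral_norm_mul_norm_le_lpNorm_two_mul_lpNorm_two hGF hF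
        · exact integral_norm_mul_norm_le_lpNorm_two_mul_lpNorm_two hGF hG
    _ = (lpNorm F 2 μ + lpNorm G 2 μ) * lpNorm (G - F) 2 μ * ‖v‖ := by ring

end

/-- Bias bound for expected conditional covariance matrices with estimated embeddings:
`‖E[Cov(X|U)] − E[Cov(X|Û)]‖_op ≤ 2 ‖X‖_{L₂} ‖E[X|Û] − E[X|U]‖_{L₂}`. -/
theorem stmt11 {Ω : Type*} {m0 : MeasurableSpace Ω} (μ : Measure Ω) [IsProbabilityMeasure μ]
    {d ru rh : ℕ}
    (X : Ω → EuclideanSpace ℝ (Fin d))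
    (U : Ω → EuclideanSpace ℝ (Fin ru)) (Uh : Ω → EuclideanSpace ℝ (Fin rh))
    (hX : MemLp X 2 μ)
    (hU : MeasurableSpace.comap U inferInstance ≤ m0)
    (hUh : MeasurableSpace.comap Uh inferInstance ≤ m0) :
    opN
      (Matrix.of (fun i j =>
          ∫ ω, (condExp (MeasurableSpace.comap U inferInstance) μ
              (fun ω => X ω i * X ω j) ω
            - condExp (MeasurableSpace.comap U inferInstance) μ (fun ω => X ω i) ω
              * condExp (MeasurableSpace.comap U inferInstance) μ (fun ω => X ω j) ω) ∂μ)
        - Matrix.of (fun i j =>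
          ∫ ω, (condExp (MeasurableSpace.comap Uh inferInstance) μ
              (fun ω => X ω i * X ω j) ω
            - condExp (MeasurableSpace.comap Uh inferInstance) μ (fun ω => X ω i) ω
              * condExp (MeasurableSpace.comap Uh inferInstance) μ (fun ω => X ω j) ω) ∂μ)) ≤
      2 * Real.sqrt (∫ ω, ‖X ω‖ ^ 2 ∂μ) *
        Real.sqrt (∫ ω, ‖condExp (MeasurableSpace.comap Uh inferInstance) μ X ω
          - condExp (MeasurableSpace.comap U inferInstance) μ X ω‖ ^ 2 ∂μ) := by
  set Y := μ[X | MeasurableSpace.comap U inferInstance]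
  set Z := μ[X | MeasurableSpace.comap Uh inferInstance]
  have hY : MemLp Y 2 μ := hX.condExp one_le_two
  have hZ : MemLp Z 2 μ := hX.condExp one_le_two
  rw [integral_condCov_eq_secondMoment_sub hU hX, integral_condCov_eq_secondMoment_sub hUh hX,
    sub_sub_sub_cancel_left]
  calc opN (secondMoment μ Z - secondMoment μ Y)
      ≤ (lpNorm Y 2 μ + lpNorm Z 2 μ) * lpNorm (Z - Y) 2 μ := opN_secondMoment_sub_le hY hZ
    _ ≤ (lpNorm X 2 μ + lpNorm X 2 μ) * lpNorm (Z - Y) 2 μ :=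
        mul_le_mul_of_nonneg_right (add_le_add (hX.lpNorm_condExp_le_lpNorm one_le_two)
          (hX.lpNorm_condExp_le_lpNorm one_le_two)) lpNorm_nonneg
    _ = 2 * √(∫ ω, ‖X ω‖ ^ 2 ∂μ) * √(∫ ω, ‖Z ω - Y ω‖ ^ 2 ∂μ) := by
        rw [lpNorm_two_eq_sqrt_integral_norm_sq hX.1,
          lpNorm_two_eq_sqrt_integral_norm_sq (hZ.sub hY).1, Pi.sub_def]
        ring
end

section
/- Let X ∈ ℝᵈ and scalar Y_j be square-integrable random variables and U, Û random vectors. Then ‖E[Cov(X, E[Y_j|X,U] | U)] − E[Cov(X, E[Y_j|X,Û] | Û)]‖ ≤ ‖X‖_{L₂}·‖E[Y_j|X,Û] − E[Y_j|X,U]‖_{L₂} + ‖Y_j‖_{L₂}·‖E[X|Û] − E[X|U]‖_{L₂}. -/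
/-!
Since `E[X|U]` is `σ(U)`-measurable, the pull-out property gives
`E[E[Y|U] E[X|U]] = E[Y E[X|U]]`, so both expected conditional covariances are of the form
`E[f X] − E[Y g]` with `f = E[Y|X,·]` and `g = E[X|·]`. This expression is linear in `(f, g)`,
so the difference is `E[(f̂ − f) X] − E[Y (ĝ − g)]`, and each term is bounded by
Cauchy–Schwarz in `L²`.
-/

open MeasureTheory

namespace MeasureTheory

variable {α E : Type*} {m m0 : MeasurableSpace α} {μ : Measure α}
  [NormedAddCommGroup E] [NormedSpace ℝ E]

lemma MemLp.integrable_smul_of_two {φ : α → ℝ} {V : α → E} (hφ : MemLp φ 2 μ)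
    (hV : MemLp V 2 μ) : Integrable (fun x => φ x • V x) μ :=
  memLp_one_iff_integrable.1 (hV.smul hφ)

lemma norm_integral_smul_le_sqrt_mul_sqrt {φ : α → ℝ} {V : α → E} (hφ : MemLp φ 2 μ)
    (hV : MemLp V 2 μ) :
    ‖∫ x, φ x • V x ∂μ‖ ≤ √(∫ x, ‖V x‖ ^ 2 ∂μ) * √(∫ x, φ x ^ 2 ∂μ) := by
  have hHolder := integral_mul_norm_le_Lp_mul_Lq Real.HolderConjugate.two_two
    (by simpa using hV.norm) (by simpa using hφ)
  simp only [abs_norm, Real.rpow_two, Real.norm_eq_abs, sq_abs] at hHolder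
  calc ‖∫ x, φ x • V x ∂μ‖ ≤ ∫ x, ‖φ x • V x‖ ∂μ := norm_integral_le_integral_norm _
    _ = ∫ x, ‖V x‖ * |φ x| ∂μ := by simp only [norm_smul, Real.norm_eq_abs, mul_comm]
    _ ≤ _ := hHolder
    _ = √(∫ x, ‖V x‖ ^ 2 ∂μ) * √(∫ x, φ x ^ 2 ∂μ) := by
      rw [Real.sqrt_eq_rpow, Real.sqrt_eq_rpow]

lemma integral_condExp_smul_of_aestronglyMeasurable [CompleteSpace E] (hm : m ≤ m0)
    [SigmaFinite (μ.trim hm)] {f : α → ℝ} {g : α → E} (hf : Integrable f μ)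
    (hfg : Integrable (fun x => f x • g x) μ) (hg : AEStronglyMeasurable[m] g μ) :
    ∫ x, μ[f|m] x • g x ∂μ = ∫ x, f x • g x ∂μ :=
  (integral_congr_ae (condExp_smul_of_aestronglyMeasurable_right hf hfg hg).symm).trans
    (integral_condExp hm)

lemma norm_integral_smul_sub_integral_smul_sub_le {X g g' : α → E} {Y f f' : α → ℝ}
    (hX : MemLp X 2 μ) (hY : MemLp Y 2 μ) (hf : MemLp f 2 μ) (hf' : MemLp f' 2 μ)
    (hg : MemLp g 2 μ) (hg' : MemLp g' 2 μ) :
    ‖((∫ x, f x • X x ∂μ) - ∫ x, Y x • g x ∂μ) - ((∫ x, f' x • X x ∂μ) - ∫ x, Y x • g' x ∂μ)‖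
      ≤ √(∫ x, ‖X x‖ ^ 2 ∂μ) * √(∫ x, (f' x - f x) ^ 2 ∂μ)
        + √(∫ x, Y x ^ 2 ∂μ) * √(∫ x, ‖g' x - g x‖ ^ 2 ∂μ) := by
  have hfX : (∫ x, f' x • X x ∂μ) - ∫ x, f x • X x ∂μ = ∫ x, (f' x - f x) • X x ∂μ := by
    rw [← integral_sub (hf'.integrable_smul_of_two hX) (hf.integrable_smul_of_two hX)]
    simp only [sub_smul]
  have hYg : (∫ x, Y x • g' x ∂μ) - ∫ x, Y x • g x ∂μ = ∫ x, Y x • (g' x - g x) ∂μ := by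
    rw [← integral_sub (hY.integrable_smul_of_two hg') (hY.integrable_smul_of_two hg)]
    simp only [smul_sub]
  rw [norm_sub_rev, sub_sub_sub_comm, hfX, hYg]
  calc _ ≤ ‖∫ x, (f' x - f x) • X x ∂μ‖ + ‖∫ x, Y x • (g' x - g x) ∂μ‖ := norm_sub_le _ _
    _ ≤ _ := add_le_add (norm_integral_smul_le_sqrt_mul_sqrt (hf'.sub hf) hX)
      (by rw [mul_comm]; exact norm_integral_smul_le_sqrt_mul_sqrt hY (hg'.sub hg))

end MeasureTheory

theorem stmt12_general {Ω : Type*} {m0 : MeasurableSpace Ω} (μ : Measure Ω) [IsProbabilityMeasure μ]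
    {d ru rh : ℕ}
    (X : Ω → EuclideanSpace ℝ (Fin d)) (Y : Ω → ℝ)
    (U : Ω → EuclideanSpace ℝ (Fin ru)) (Uh : Ω → EuclideanSpace ℝ (Fin rh))
    (hX : MemLp X 2 μ) (hY : MemLp Y 2 μ)
    (hU : MeasurableSpace.comap U inferInstance ≤ m0)
    (hUh : MeasurableSpace.comap Uh inferInstance ≤ m0) :
    ‖((∫ ω, (condExp (MeasurableSpace.comap (fun ω => (X ω, U ω)) inferInstance) μ Y ω) • X ω ∂μ)
        - ∫ ω, (condExp (MeasurableSpace.comap U inferInstance) μ Y ω) •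
            (condExp (MeasurableSpace.comap U inferInstance) μ X ω) ∂μ)
      - ((∫ ω, (condExp (MeasurableSpace.comap (fun ω => (X ω, Uh ω)) inferInstance) μ Y ω) • X ω ∂μ)
        - ∫ ω, (condExp (MeasurableSpace.comap Uh inferInstance) μ Y ω) •
            (condExp (MeasurableSpace.comap Uh inferInstance) μ X ω) ∂μ)‖ ≤
      Real.sqrt (∫ ω, ‖X ω‖ ^ 2 ∂μ) *
        Real.sqrt (∫ ω, (condExp (MeasurableSpace.comap (fun ω => (X ω, Uh ω)) inferInstance) μ Y ω
          - condExp (MeasurableSpace.comap (fun ω => (X ω, U ω)) inferInstance) μ Y ω) ^ 2 ∂μ) +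
      Real.sqrt (∫ ω, (Y ω) ^ 2 ∂μ) *
        Real.sqrt (∫ ω, ‖condExp (MeasurableSpace.comap Uh inferInstance) μ X ω
          - condExp (MeasurableSpace.comap U inferInstance) μ X ω‖ ^ 2 ∂μ) := by
  have pullOut {m : MeasurableSpace Ω} (hm : m ≤ m0) :
      ∫ ω, μ[Y|m] ω • μ[X|m] ω ∂μ = ∫ ω, Y ω • μ[X|m] ω ∂μ :=
    integral_condExp_smul_of_aestronglyMeasurable hm (hY.integrable one_le_two)
      (hY.integrable_smul_of_two (hX.condExp one_le_two))
      stronglyMeasurable_condExp.aestronglyMeasurable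
  rw [pullOut hU, pullOut hUh]
  exact norm_integral_smul_sub_integral_smul_sub_le hX hY (hY.condExp one_le_two)
    (hY.condExp one_le_two) (hX.condExp one_le_two) (hX.condExp one_le_two)

/-- Bias bound for expected conditional covariances `E[Cov(X, E[Y_j|X,U] | U)]` with
estimated embeddings:
`‖E[Cov(X,E[Y|X,U]|U)] − E[Cov(X,E[Y|X,Û]|Û)]‖ ≤ ‖X‖_{L₂}‖E[Y|X,Û] − E[Y|X,U]‖_{L₂}
  + ‖Y‖_{L₂}‖E[X|Û] − E[X|U]‖_{L₂}`. -/
theorem stmt12 {Ω : Type*} {m0 : MeasurableSpace Ω} (μ : Measure Ω) [IsProbabilityMeasure μ]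
    {d ru rh : ℕ}
    (X : Ω → EuclideanSpace ℝ (Fin d)) (Y : Ω → ℝ)
    (U : Ω → EuclideanSpace ℝ (Fin ru)) (Uh : Ω → EuclideanSpace ℝ (Fin rh))
    (hX : MemLp X 2 μ) (hY : MemLp Y 2 μ)
    (hU : MeasurableSpace.comap U inferInstance ≤ m0)
    (hUh : MeasurableSpace.comap Uh inferInstance ≤ m0)
    (hXU : MeasurableSpace.comap (fun ω => (X ω, U ω)) inferInstance ≤ m0)
    (hXUh : MeasurableSpace.comap (fun ω => (X ω, Uh ω)) inferInstance ≤ m0) :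
    ‖((∫ ω, (condExp (MeasurableSpace.comap (fun ω => (X ω, U ω)) inferInstance) μ Y ω) • X ω ∂μ)
        - ∫ ω, (condExp (MeasurableSpace.comap U inferInstance) μ Y ω) •
            (condExp (MeasurableSpace.comap U inferInstance) μ X ω) ∂μ)
      - ((∫ ω, (condExp (MeasurableSpace.comap (fun ω => (X ω, Uh ω)) inferInstance) μ Y ω) • X ω ∂μ)
        - ∫ ω, (condExp (MeasurableSpace.comap Uh inferInstance) μ Y ω) •
            (condExp (MeasurableSpace.comap Uh inferInstance) μ X ω) ∂μ)‖ ≤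
      Real.sqrt (∫ ω, ‖X ω‖ ^ 2 ∂μ) *
        Real.sqrt (∫ ω, (condExp (MeasurableSpace.comap (fun ω => (X ω, Uh ω)) inferInstance) μ Y ω
          - condExp (MeasurableSpace.comap (fun ω => (X ω, U ω)) inferInstance) μ Y ω) ^ 2 ∂μ) +
      Real.sqrt (∫ ω, (Y ω) ^ 2 ∂μ) *
        Real.sqrt (∫ ω, ‖condExp (MeasurableSpace.comap Uh inferInstance) μ X ω
          - condExp (MeasurableSpace.comap U inferInstance) μ X ω‖ ^ 2 ∂μ) :=
  stmt12_general μ X Y U Uh hX hY hU hUh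
end
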